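/- arXiv:2502.03267 — 2 statements merged into one kernel-verified Lean document; each statement's English description precedes it below -/
import Mathlib

section
/- Let n ≥ 1, let Ω be any subset of ℝⁿ, and let δ ∈ (0, n]. Then ‖f‖₁ := ∫_Ω |f| dH̃^δ_∞ has the properties of a norm on nL¹(Ω, H̃^δ_∞) modulo H̃^δ_∞-almost everywhere equality: (i) ‖f‖₁ = 0 if and only if f(x) = 0 for H̃^δ_∞-almost every x ∈ Ω; (ii) ‖a·f‖₁ = |a|·‖f‖₁ for every real a; (iii) ‖f + g‖₁ ≤ ‖f‖₁ + ‖g‖₁ for all f, g ∈ nL¹(Ω, H̃^δ_∞). -/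
/-!
Writing `Ω`-restricted Choquet integrals as `∫₀^∞ H {Ω.indicator F > t} dt` for the set
function `H = H̃^δ_∞`, only three properties of `H` are needed: monotonicity, countable
subadditivity and strong subadditivity `H (E ∪ F) + H (E ∩ F) ≤ H E + H F`.

The distribution function is antitone, so the integral vanishes iff `H {F > t} = 0` for every
`t > 0`; the support of `F` is a countable union of such sets. Homogeneity is the substitution
`t ↦ t / |a|`. Strong subadditivity holds because two dyadic cubes are nested or disjoint: merging
covers of `E` and `F`, the maximal cubes cover `E ∪ F` and the remaining ones cover `E ∩ F`.
For `ℕ`-valued `u, v` it gives `∑ₖ H {u + v > k} ≤ ∑ₖ H {u > k} + ∑ₖ H {v > k}`, by adding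
`v` one level at a time; discretising `|f|` and `|g|` with mesh `ε → 0` yields the triangle
inequality.
-/

open MeasureTheory Set Metric Filter Topology
open scoped ENNReal

noncomputable section

/-- Euclidean space `ℝⁿ`. -/
abbrev En (n : ℕ) : Type := EuclideanSpace ℝ (Fin n)

/-- The half-open dyadic cube `2^k (m + [0,1)ⁿ)`, `k : ℤ`, `m : ℤⁿ`. -/
def dyadicCube (n : ℕ) (k : ℤ) (m : Fin n → ℤ) : Set (En n) :=
  {x | ∀ i, (m i : ℝ) * 2 ^ k ≤ x i ∧ x i < ((m i : ℝ) + 1) * 2 ^ k}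

/-- The `δ`-dimensional dyadic Hausdorff content `H̃^δ_∞`: the infimum of `Σ ℓ(Q_i)^δ`
over all countable collections of dyadic cubes whose union's interior covers `E`. -/
def dyadicContent (n : ℕ) (δ : ℝ) (E : Set (En n)) : ℝ≥0∞ :=
  ⨅ (c : ℕ → ℤ × (Fin n → ℤ))
    (_ : E ⊆ interior (⋃ i, dyadicCube n (c i).1 (c i).2)),
    ∑' i, ENNReal.ofReal (((2 : ℝ) ^ (c i).1) ^ δ)

/-- The Choquet integral `∫_Ω f dH̃^δ_∞ := ∫_0^∞ H̃^δ_∞({x ∈ Ω : f x > t}) dt`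
of a `[0,∞]`-valued function over `Ω ⊆ ℝⁿ`. -/
def choquetIntegral (n : ℕ) (δ : ℝ) (Ω : Set (En n)) (f : En n → ℝ≥0∞) : ℝ≥0∞ :=
  ∫⁻ t in Ioi (0 : ℝ), dyadicContent n δ {x | x ∈ Ω ∧ ENNReal.ofReal t < f x}

/-- The Choquet integral `∫_Ω |f| dH̃^δ_∞` of a real-valued function. -/
def choquetIntegralAbs (n : ℕ) (δ : ℝ) (Ω : Set (En n)) (f : En n → ℝ) : ℝ≥0∞ :=
  choquetIntegral n δ Ω (fun x => ENNReal.ofReal |f x|)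

/-- The Choquet integral `∫_Ω |f| dH̃^δ_∞` of an extended-real-valued function. -/
def choquetIntegralEAbs (n : ℕ) (δ : ℝ) (Ω : Set (En n)) (f : En n → EReal) : ℝ≥0∞ :=
  choquetIntegral n δ Ω (fun x => (f x).abs)

/-- The ball average `f^δ_{B(x,r)} := (1/H̃^δ_∞(B(x,r))) ∫_{B(x,r)} f dH̃^δ_∞`. -/
def ballAvg (n : ℕ) (δ : ℝ) (f : En n → ℝ≥0∞) (x : En n) (r : ℝ) : ℝ≥0∞ :=
  choquetIntegral n δ (ball x r) f / dyadicContent n δ (ball x r)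

/-- The Hausdorff-content centred maximal function `M^δ f(x)`. -/
def maximal (n : ℕ) (δ : ℝ) (f : En n → ℝ≥0∞) (x : En n) : ℝ≥0∞ :=
  ⨆ (r : ℝ) (_ : 0 < r), ballAvg n δ f x r

/-- `f^δ_*(x) := limsup_{r→0⁺} (1/H̃^δ_∞(B(x,r))) ∫_{B(x,r)} |f(y) − f(x)| dH̃^δ_∞(y)`. -/
def lebDev (n : ℕ) (δ : ℝ) (f : En n → ℝ) (x : En n) : ℝ≥0∞ :=
  limsup (fun r : ℝ => choquetIntegralAbs n δ (ball x r) (fun y => f y - f x) /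
    dyadicContent n δ (ball x r)) (𝓝[>] (0 : ℝ))

/-- `limsup_{r→0⁺} f^δ_{B(x,r)}` of the ball averages. -/
def limsupAvg (n : ℕ) (δ : ℝ) (f : En n → ℝ≥0∞) (x : En n) : ℝ≥0∞ :=
  limsup (fun r : ℝ => ballAvg n δ f x r) (𝓝[>] (0 : ℝ))

lemma floor_div_two_zpow_of_le (r : ℝ) {k₁ k₂ : ℤ} (h : k₁ ≤ k₂) :
    ⌊r / 2 ^ k₂⌋ = ⌊r / 2 ^ k₁⌋ / 2 ^ (k₂ - k₁).toNat := by
  have hk : (2 : ℝ) ^ k₂ = 2 ^ k₁ * ((2 ^ (k₂ - k₁).toNat : ℕ) : ℝ) := by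
    rw [Nat.cast_pow, Nat.cast_ofNat, ← zpow_natCast, ← zpow_add₀ two_ne_zero]
    congr 1; omega
  rw [hk, ← div_div, Int.floor_div_natCast, Nat.cast_pow, Nat.cast_ofNat]

section HalfLine

variable {a ε : ℝ}

lemma iUnion_Ioc_add_mul (a : ℝ) (hε : 0 < ε) :
    ⋃ k : ℕ, Ioc (a + k * ε) (a + (k + 1) * ε) = Ioi a := by
  refine Subset.antisymm (iUnion_subset fun k t ht => ?_) fun t (ht : a < t) => ?_
  · exact lt_of_le_of_lt (by nlinarith [k.cast_nonneg (α := ℝ)]) ht.1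
  · have hpos : 0 < (t - a) / ε := div_pos (sub_pos.mpr ht) hε
    set k := ⌈(t - a) / ε⌉₊
    have hk : 0 < k := Nat.ceil_pos.mpr hpos
    refine mem_iUnion.mpr ⟨k - 1, ?_, ?_⟩ <;> rw [Nat.cast_pred hk]
    · have := Nat.ceil_lt_add_one hpos.le
      rw [← lt_sub_iff_add_lt', ← lt_div_iff₀ hε]; linarith
    · have := Nat.le_ceil ((t - a) / ε)
      rw [sub_add_cancel, ← sub_le_iff_le_add', ← div_le_iff₀ hε]; exact this

lemma pairwise_disjoint_Ioc_add_mul (a : ℝ) (hε : 0 ≤ ε) :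
    Pairwise (Function.onFun Disjoint fun k : ℕ => Ioc (a + k * ε) (a + (k + 1) * ε)) :=
  (pairwise_disjoint_on _).mpr fun i j hij => Ioc_disjoint_Ioc_of_le <| by
    have : (i : ℝ) + 1 ≤ j := by exact_mod_cast hij
    nlinarith

lemma setLIntegral_Ioi_eq_tsum (a : ℝ) (hε : 0 < ε) (D : ℝ → ℝ≥0∞) :
    ∫⁻ t in Ioi a, D t =
      ∑' k : ℕ, ∫⁻ t in Ioc (a + k * ε) (a + (k + 1) * ε), D t := by
  rw [← iUnion_Ioc_add_mul a hε,
    lintegral_iUnion (fun _ => measurableSet_Ioc) (pairwise_disjoint_Ioc_add_mul a hε.le)]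

lemma setLIntegral_Ioc_add_mul_const (a : ℝ) (k : ℕ) (c : ℝ≥0∞) :
    ∫⁻ _ in Ioc (a + k * ε) (a + (k + 1) * ε), c = ENNReal.ofReal ε * c := by
  rw [setLIntegral_const, Real.volume_Ioc, mul_comm]
  congr 2; ring

variable {D : ℝ → ℝ≥0∞}

lemma Antitone.setLIntegral_Ioi_le_tsum (hD : Antitone D) (a : ℝ) (hε : 0 < ε) :
    ∫⁻ t in Ioi a, D t ≤ ∑' k : ℕ, ENNReal.ofReal ε * D (a + k * ε) := by
  rw [setLIntegral_Ioi_eq_tsum a hε]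
  refine ENNReal.tsum_le_tsum fun k => ?_
  rw [← setLIntegral_Ioc_add_mul_const a]
  exact setLIntegral_mono' measurableSet_Ioc fun t ht => hD ht.1.le

lemma Antitone.tsum_le_setLIntegral_Ioi (hD : Antitone D) (a : ℝ) (hε : 0 < ε) :
    ∑' k : ℕ, ENNReal.ofReal ε * D (a + (k + 1) * ε) ≤ ∫⁻ t in Ioi a, D t := by
  rw [setLIntegral_Ioi_eq_tsum a hε]
  refine ENNReal.tsum_le_tsum fun k => ?_
  rw [← setLIntegral_Ioc_add_mul_const a]
  exact setLIntegral_mono' measurableSet_Ioc fun t ht => hD ht.2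

lemma setLIntegral_Ioi_zero_le_of_forall {c : ℝ≥0∞}
    (h : ∀ ε > 0, ∫⁻ t in Ioi ε, D t ≤ c) : ∫⁻ t in Ioi (0 : ℝ), D t ≤ c := by
  have hU : ⋃ m : ℕ, Ioi (1 / ((m : ℝ) + 1)) = Ioi 0 := by
    exact Subset.antisymm (iUnion_subset fun m => Ioi_subset_Ioi Nat.one_div_pos_of_nat.le)
      fun t (ht : 0 < t) => mem_iUnion.mpr (exists_nat_one_div_lt ht)
  have hmono : Monotone fun m : ℕ => Ioi (1 / ((m : ℝ) + 1)) := fun i j hij =>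
    Ioi_subset_Ioi (Nat.one_div_le_one_div hij)
  rw [← hU, setLIntegral_iUnion_of_directed _ hmono.directed_le]
  exact iSup_le fun m => h _ Nat.one_div_pos_of_nat

lemma setLIntegral_Ioi_zero_comp_div {r : ℝ} (hr : 0 < r) (G : ℝ → ℝ≥0∞) :
    ∫⁻ t in Ioi (0 : ℝ), G (t / r) = ENNReal.ofReal r * ∫⁻ s in Ioi (0 : ℝ), G s := by
  have he := measurableEmbedding_mulLeft₀ (inv_ne_zero hr.ne')
  have hpre : (r⁻¹ * ·) ⁻¹' Ioi (0 : ℝ) = Ioi 0 := by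
    ext t; simp [mul_pos_iff_of_pos_left (inv_pos.mpr hr)]
  calc ∫⁻ t in Ioi (0 : ℝ), G (t / r)
        = ∫⁻ t in (r⁻¹ * ·) ⁻¹' Ioi 0, G (r⁻¹ * t) := by
          simp only [hpre, div_eq_inv_mul]
    _ = ∫⁻ s in Ioi (0 : ℝ), G s ∂(Measure.map (r⁻¹ * ·) volume) := by
        rw [he.restrict_map, he.lintegral_map]
    _ = ENNReal.ofReal r * ∫⁻ s in Ioi (0 : ℝ), G s := by
        rw [Real.map_volume_mul_left (inv_ne_zero hr.ne'), inv_inv, abs_of_pos hr,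
          Measure.restrict_smul, lintegral_smul_measure, smul_eq_mul]

end HalfLine

section Capacity

variable {α : Type*} {H : Set α → ℝ≥0∞}

def StronglySubadditive (H : Set α → ℝ≥0∞) : Prop :=
  ∀ A B, H (A ∪ B) + H (A ∩ B) ≤ H A + H B

def levelSum (H : Set α → ℝ≥0∞) (u : α → ℕ) : ℝ≥0∞ :=
  ∑' k : ℕ, H {x | k < u x}

lemma levelSum_add_indicator_le (hH : Monotone H) (hsub : StronglySubadditive H)
    (u : α → ℕ) (W : Set α) :
    levelSum H (fun x => u x + W.indicator 1 x) ≤ levelSum H u + H W := by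
  set A : ℕ → Set α := fun k => {x | k < u x + W.indicator 1 x}
  set B : ℕ → Set α := fun k => {x | k < u x}
  set T : ℕ → Set α := fun k => {x | k ≤ u x} ∩ W
  -- strong subadditivity on `A k = B k ∪ T k` and `B k ∩ T k = T (k + 1)`, telescoped
  have hstep : ∀ k, H (A k) + H (T (k + 1)) ≤ H (B k) + H (T k) := by
    intro k
    have hunion : A k = B k ∪ T k := by
      ext x; by_cases hx : x ∈ W <;> simp [A, B, T, hx]; omega
    have hinter : B k ∩ T k = T (k + 1) := by
      ext x; simp only [B, T, mem_inter_iff, mem_ofPred_eq]; grind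
    simpa only [← hunion, hinter] using hsub (B k) (T k)
  have key : ∀ K : ℕ, ∑ k ∈ Finset.range K, H (A k) + H (T K) ≤
      ∑ k ∈ Finset.range K, H (B k) + H W := by
    intro K
    induction K with
    | zero => simpa using hH inter_subset_right
    | succ K ih =>
      calc ∑ k ∈ Finset.range (K + 1), H (A k) + H (T (K + 1))
          = ∑ k ∈ Finset.range K, H (A k) + (H (A K) + H (T (K + 1))) := by
            rw [Finset.sum_range_succ]; ring
        _ ≤ ∑ k ∈ Finset.range K, H (A k) + (H (B K) + H (T K)) := by grw [hstep]
        _ = (∑ k ∈ Finset.range K, H (A k) + H (T K)) + H (B K) := by ring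
        _ ≤ (∑ k ∈ Finset.range K, H (B k) + H W) + H (B K) := by grw [ih]
        _ = ∑ k ∈ Finset.range (K + 1), H (B k) + H W := by rw [Finset.sum_range_succ]; ring
  rw [levelSum, ENNReal.tsum_eq_iSup_nat]
  exact iSup_le fun K => le_self_add.trans ((key K).trans (by grw [ENNReal.sum_le_tsum]; rfl))

lemma levelSum_add_min_le (hH : Monotone H) (hsub : StronglySubadditive H)
    (u v : α → ℕ) (M : ℕ) :
    levelSum H (fun x => u x + min (v x) M) ≤
      levelSum H u + ∑ j ∈ Finset.range M, H {x | j < v x} := by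
  induction M with
  | zero => simp
  | succ M ih =>
    have hsplit : (fun x => u x + min (v x) (M + 1)) =
        fun x => (u x + min (v x) M) + {x | M < v x}.indicator 1 x := by
      ext x; by_cases hx : M < v x <;> simp [hx] <;> omega
    rw [hsplit, Finset.sum_range_succ, ← add_assoc]
    exact (levelSum_add_indicator_le hH hsub _ _).trans (by gcongr)

lemma levelSum_add_le (hH : Monotone H) (hsub : StronglySubadditive H)
    (u v : α → ℕ) : levelSum H (fun x => u x + v x) ≤ levelSum H u + levelSum H v := by
  rw [levelSum, ENNReal.tsum_eq_iSup_nat]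
  refine iSup_le fun K => ?_
  have htrunc : ∀ k ∈ Finset.range K,
      H {x | k < u x + v x} = H {x | k < u x + min (v x) K} := by
    intro k hk
    rw [Finset.mem_range] at hk
    congr 1; ext x; simp only [mem_ofPred_eq]; omega
  calc ∑ k ∈ Finset.range K, H {x | k < u x + v x}
      = ∑ k ∈ Finset.range K, H {x | k < u x + min (v x) K} := Finset.sum_congr rfl htrunc
    _ ≤ levelSum H (fun x => u x + min (v x) K) := ENNReal.sum_le_tsum _
    _ ≤ levelSum H u + ∑ j ∈ Finset.range K, H {x | j < v x} :=
        levelSum_add_min_le hH hsub u v K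
    _ ≤ levelSum H u + levelSum H v := by gcongr; exact ENNReal.sum_le_tsum _

def choquet (H : Set α → ℝ≥0∞) (F : α → ℝ≥0∞) : ℝ≥0∞ :=
  ∫⁻ t in Ioi (0 : ℝ), H {x | ENNReal.ofReal t < F x}

lemma antitone_distribution (hH : Monotone H) (F : α → ℝ≥0∞) :
    Antitone fun t : ℝ => H {x | ENNReal.ofReal t < F x} := fun _ _ hst =>
  hH fun _ hx => (ENNReal.ofReal_le_ofReal hst).trans_lt hx

lemma choquet_mono (hH : Monotone H) {F G : α → ℝ≥0∞} (h : F ≤ G) :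
    choquet H F ≤ choquet H G :=
  lintegral_mono fun _ => hH fun x hx => hx.trans_le (h x)

lemma distribution_eq_zero_of_choquet_eq_zero (hH : Monotone H) {F : α → ℝ≥0∞}
    (h : choquet H F = 0) {t : ℝ} (ht : 0 < t) : H {x | ENNReal.ofReal t < F x} = 0 := by
  have hle : ENNReal.ofReal t * H {x | ENNReal.ofReal t < F x} ≤ choquet H F := calc
    _ = ∫⁻ _ in Ioc 0 t, H {x | ENNReal.ofReal t < F x} := by
      rw [setLIntegral_const, Real.volume_Ioc, sub_zero, mul_comm]
    _ ≤ ∫⁻ s in Ioc 0 t, H {x | ENNReal.ofReal s < F x} :=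
      setLIntegral_mono' measurableSet_Ioc fun s hs => antitone_distribution hH F hs.2
    _ ≤ choquet H F := lintegral_mono_set Ioc_subset_Ioi_self
  simpa [h, ht.not_ge] using hle

lemma choquet_eq_zero_iff (hH : Monotone H)
    (hnull : ∀ E : ℕ → Set α, (∀ k, H (E k) = 0) → H (⋃ k, E k) = 0)
    {F : α → ℝ≥0∞} :
    choquet H F = 0 ↔ H (Function.support F) = 0 := by
  constructor
  · intro h
    refine le_antisymm ((hH fun x (hx : F x ≠ 0) => ?_).trans_eq (hnull _ fun k =>
      distribution_eq_zero_of_choquet_eq_zero hH h (Nat.one_div_pos_of_nat (n := k)))) bot_le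
    obtain ⟨r, -, hr0, hrF⟩ := ENNReal.lt_iff_exists_real_btwn.mp (pos_iff_ne_zero.mpr hx)
    obtain ⟨k, hk⟩ := exists_nat_one_div_lt (ENNReal.ofReal_pos.mp hr0)
    exact mem_iUnion.mpr
      ⟨k, (ENNReal.ofReal_lt_ofReal_iff_of_nonneg (by positivity)).mpr hk |>.trans hrF⟩
  · intro h
    refine le_antisymm ?_ bot_le
    calc choquet H F ≤ ∫⁻ _ in Ioi (0 : ℝ), 0 :=
          lintegral_mono fun t => (hH fun x (hx : _ < F x) => (hx.trans_le' bot_le).ne').trans_eq h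
      _ = 0 := lintegral_zero

lemma choquet_const_mul (hH : H ∅ = 0) {c : ℝ≥0∞} (hc : c ≠ ∞) (F : α → ℝ≥0∞) :
    choquet H (fun x => c * F x) = c * choquet H F := by
  rcases eq_or_ne c 0 with rfl | hc0
  · simp [choquet, hH]
  have hr : 0 < c.toReal := ENNReal.toReal_pos hc0 hc
  have hset : ∀ t : ℝ, {x | ENNReal.ofReal t < c * F x} =
      {x | ENNReal.ofReal (t / c.toReal) < F x} := by
    intro t
    ext x
    rw [mem_ofPred_eq, mem_ofPred_eq, ENNReal.ofReal_div_of_pos hr, ENNReal.ofReal_toReal hc,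
      ENNReal.div_lt_iff (.inl hc0) (.inl hc), mul_comm]
  simp only [choquet, hset]
  rw [setLIntegral_Ioi_zero_comp_div hr (fun s => H {x | ENNReal.ofReal s < F x}),
    ENNReal.ofReal_toReal hc]

/-- Rounding `f` and `g` up to the grid `ε ℕ` loses at most two levels, whence the cut-off
`2 ε`. -/
lemma lintegral_Ioi_two_mul_distribution_add_le (hH : Monotone H)
    (hsub : StronglySubadditive H) (f g : α → ℝ) {ε : ℝ} (hε : 0 < ε) :
    ∫⁻ t in Ioi (2 * ε), H {x | ENNReal.ofReal t < ENNReal.ofReal (f x + g x)} ≤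
      choquet H (fun x => ENNReal.ofReal (f x)) + choquet H (fun x => ENNReal.ofReal (g x)) := by
  set D : (α → ℝ) → ℝ → ℝ≥0∞ := fun h t =>
    H {x | ENNReal.ofReal t < ENNReal.ofReal (h x)}
  have hD : ∀ h, Antitone (D h) := fun h => antitone_distribution hH _
  set level : (α → ℝ) → α → ℕ := fun h x => ⌈h x / ε⌉₊ - 1
  have hlevel : ∀ h (k : ℕ), {x | k < level h x} =
      {x | ENNReal.ofReal (0 + (k + 1) * ε) < ENNReal.ofReal (h x)} := by
    intro h k
    ext x
    rw [mem_ofPred_eq, mem_ofPred_eq, ENNReal.ofReal_lt_ofReal_iff_of_nonneg (by positivity),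
      zero_add, ← lt_div_iff₀ hε, ← Nat.cast_succ, ← Nat.lt_ceil]
    simp only [level]; omega
  have hsum : ∀ (k : ℕ) x, ENNReal.ofReal (2 * ε + k * ε) < ENNReal.ofReal (f x + g x) →
      k < level f x + level g x := by
    intro k x hx
    rw [ENNReal.ofReal_lt_ofReal_iff_of_nonneg (by positivity)] at hx
    have hdiv : (k : ℝ) + 2 < f x / ε + g x / ε := by
      rw [← add_div, lt_div_iff₀ hε]; linarith
    have hceil : ((k + 2 : ℕ) : ℝ) < ⌈f x / ε⌉₊ + ⌈g x / ε⌉₊ := by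
      push_cast; linarith [Nat.le_ceil (f x / ε), Nat.le_ceil (g x / ε)]
    norm_cast at hceil
    simp only [level]; omega
  calc ∫⁻ t in Ioi (2 * ε), D (fun x => f x + g x) t
      ≤ ∑' k : ℕ, ENNReal.ofReal ε * D (fun x => f x + g x) (2 * ε + k * ε) :=
        (hD _).setLIntegral_Ioi_le_tsum _ hε
    _ ≤ ∑' k : ℕ, ENNReal.ofReal ε * H {x | k < level f x + level g x} := by
        gcongr with k; exact hH fun x => hsum k x
    _ ≤ ENNReal.ofReal ε * (levelSum H (level f) + levelSum H (level g)) := by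
        rw [ENNReal.tsum_mul_left]; gcongr; exact levelSum_add_le hH hsub _ _
    _ = ∑' k : ℕ, ENNReal.ofReal ε * D f (0 + (k + 1) * ε) +
        ∑' k : ℕ, ENNReal.ofReal ε * D g (0 + (k + 1) * ε) := by
        simp only [levelSum, hlevel, D, mul_add, ENNReal.tsum_mul_left]
    _ ≤ _ := add_le_add ((hD f).tsum_le_setLIntegral_Ioi 0 hε)
        ((hD g).tsum_le_setLIntegral_Ioi 0 hε)

lemma choquet_ofReal_add_le (hH : Monotone H) (hsub : StronglySubadditive H)
    (f g : α → ℝ) :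
    choquet H (fun x => ENNReal.ofReal (f x + g x)) ≤
      choquet H (fun x => ENNReal.ofReal (f x)) + choquet H (fun x => ENNReal.ofReal (g x)) :=
  setLIntegral_Ioi_zero_le_of_forall fun ε hε => by
    simpa [mul_div_cancel₀] using
      lintegral_Ioi_two_mul_distribution_add_le hH hsub f g (half_pos hε)

end Capacity

namespace Dyadic

variable {n : ℕ} {δ : ℝ}

def cube (n : ℕ) (p : ℤ × (Fin n → ℤ)) : Set (En n) := dyadicCube n p.1 p.2

def weight (δ : ℝ) (k : ℤ) : ℝ≥0∞ := ENNReal.ofReal (((2 : ℝ) ^ k) ^ δ)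

lemma mem_cube_iff {p : ℤ × (Fin n → ℤ)} {x : En n} :
    x ∈ cube n p ↔ ∀ i, ⌊x i / 2 ^ p.1⌋ = p.2 i := by
  have h : (0 : ℝ) < 2 ^ p.1 := zpow_pos two_pos _
  simp only [cube, dyadicCube, mem_ofPred_eq, Int.floor_eq_iff, le_div_iff₀ h, div_lt_iff₀ h]

lemma cube_subset_of_mem_of_le {p q : ℤ × (Fin n → ℤ)} {x : En n}
    (hp : x ∈ cube n p) (hq : x ∈ cube n q) (h : p.1 ≤ q.1) : cube n p ⊆ cube n q := by
  rw [mem_cube_iff] at hp hq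
  intro y hy
  rw [mem_cube_iff] at hy ⊢
  intro i
  rw [← hq i, floor_div_two_zpow_of_le _ h, floor_div_two_zpow_of_le _ h, hy i, hp i]

lemma cube_subset_or_subset {p q : ℤ × (Fin n → ℤ)} {x : En n}
    (hp : x ∈ cube n p) (hq : x ∈ cube n q) : cube n p ⊆ cube n q ∨ cube n q ⊆ cube n p :=
  (le_total p.1 q.1).imp (cube_subset_of_mem_of_le hp hq) (cube_subset_of_mem_of_le hq hp)

lemma weight_eq_rpow (δ : ℝ) (k : ℤ) :
    weight δ k = ENNReal.ofReal (2 ^ ((k : ℝ) * δ)) := by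
  rw [weight, ← Real.rpow_intCast, ← Real.rpow_mul zero_le_two]

lemma tendsto_weight_atBot (hδ : 0 < δ) : Tendsto (weight δ) atBot (𝓝 0) := by
  have h : Tendsto (fun k : ℤ => (k : ℝ) * δ) atBot atBot :=
    tendsto_intCast_atBot_iff.mpr tendsto_id |>.atBot_mul_const hδ
  rw [funext (weight_eq_rpow δ), ← ENNReal.ofReal_zero]
  exact ENNReal.tendsto_ofReal ((tendsto_rpow_atBot_of_base_gt_one 2 one_lt_two).comp h)

lemma tendsto_weight_atTop (hδ : 0 < δ) : Tendsto (weight δ) atTop (𝓝 ∞) := by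
  have h : Tendsto (fun k : ℤ => (k : ℝ) * δ) atTop atTop :=
    tendsto_intCast_atTop_iff.mpr tendsto_id |>.atTop_mul_const hδ
  rw [funext (weight_eq_rpow δ)]
  exact ENNReal.tendsto_ofReal_atTop.comp ((tendsto_rpow_atTop_of_base_gt_one 2 one_lt_two).comp h)

lemma exists_tsum_weight_lt (hδ : 0 < δ) {ε : ℝ≥0∞} (hε : ε ≠ 0) :
    ∃ k : ℕ → ℤ, ∑' i, weight δ (k i) < ε := by
  obtain ⟨ε', hε'pos, hε'⟩ := ENNReal.exists_pos_sum_of_countable' hε ℕ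
  choose k hk using fun i =>
    ((tendsto_weight_atBot hδ).eventually (gt_mem_nhds (hε'pos i))).exists
  exact ⟨k, (ENNReal.tsum_le_tsum fun i => (hk i).le).trans_lt hε'⟩

lemma exists_forall_le_of_tsum_weight_ne_top (hδ : 0 < δ) {ι : Type*} {k : ι → ℤ}
    (h : ∑' i, weight δ (k i) ≠ ∞) : ∃ K, ∀ i, k i ≤ K := by
  obtain ⟨K, hK⟩ :=
    ((tendsto_weight_atTop hδ).eventually (lt_mem_nhds h.lt_top)).exists_forall_of_atTop
  exact ⟨K, fun i => le_of_not_ge fun hi => (hK _ hi).not_ge (ENNReal.le_tsum i)⟩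

/-- Merging two covers, a cube is kept for the cover of the union when no cube of the other
cover contains it; a cube occurring in both covers is kept only from the first one. -/
def Kept (c d : ℕ → ℤ × (Fin n → ℤ)) : ℕ ⊕ ℕ → Prop
  | .inl i => ¬∃ j, cube n (c i) ⊂ cube n (d j)
  | .inr j => ¬∃ i, cube n (d j) ⊆ cube n (c i)

lemma exists_kept_mem {c d : ℕ → ℤ × (Fin n → ℤ)} {K : ℤ}
    (hK : ∀ j, (Sum.elim c d j).1 ≤ K) {x : En n}
    (hx : x ∈ (⋃ i, cube n (c i)) ∪ ⋃ j, cube n (d j)) :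
    ∃ j, Kept c d j ∧ x ∈ cube n (Sum.elim c d j) := by
  set C := Sum.elim c d
  have hne : ∃ j, x ∈ cube n (C j) := by
    rcases hx with hx | hx <;> obtain ⟨i, hi⟩ := mem_iUnion.mp hx
    exacts [⟨.inl i, hi⟩, ⟨.inr i, hi⟩]
  obtain ⟨-, ⟨j₀, hx₀, rfl⟩, hmax⟩ := Int.exists_greatest_of_bdd
    (P := fun k => ∃ j, x ∈ cube n (C j) ∧ (C j).1 = k)
    ⟨K, fun _ ⟨j, _, hj⟩ => hj ▸ hK j⟩ (let ⟨j, hj⟩ := hne; ⟨_, j, hj, rfl⟩)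
  have htop : ∀ j, x ∈ cube n (C j) → cube n (C j) ⊆ cube n (C j₀) := fun j hj =>
    cube_subset_of_mem_of_le hj hx₀ (hmax _ ⟨j, hj, rfl⟩)
  by_cases hc : ∃ i, cube n (c i) = cube n (C j₀)
  · obtain ⟨i, hi⟩ := hc
    refine ⟨.inl i, fun ⟨j, hij⟩ => hij.2 ?_, hi ▸ hx₀⟩
    exact hi ▸ htop (.inr j) (hij.1 (hi ▸ hx₀))
  · rcases j₀ with i | j
    · exact absurd ⟨i, rfl⟩ hc
    · exact ⟨.inr j, fun ⟨i, hji⟩ => hc ⟨i, (htop (.inl i) (hji hx₀)).antisymm hji⟩,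
        hx₀⟩

lemma exists_not_kept_mem {c d : ℕ → ℤ × (Fin n → ℤ)} {x : En n}
    (hx : x ∈ (⋃ i, cube n (c i)) ∩ ⋃ j, cube n (d j)) :
    ∃ j, ¬Kept c d j ∧ x ∈ cube n (Sum.elim c d j) := by
  obtain ⟨⟨i, hi⟩, ⟨j, hj⟩⟩ := And.imp mem_iUnion.mp mem_iUnion.mp hx
  by_cases hdc : cube n (d j) ⊆ cube n (c i)
  · exact ⟨.inr j, fun h => h ⟨i, hdc⟩, hj⟩
  · exact ⟨.inl i, fun h => h ⟨j, (cube_subset_or_subset hi hj).resolve_right hdc, hdc⟩,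
      hi⟩

end Dyadic

section DyadicContent

open Dyadic

variable {n : ℕ} {δ : ℝ}

lemma dyadicContent_eq (E : Set (En n)) : dyadicContent n δ E =
    ⨅ (c : ℕ → ℤ × (Fin n → ℤ)) (_ : E ⊆ interior (⋃ i, cube n (c i))),
      ∑' i, weight δ (c i).1 := rfl

lemma dyadicContent_mono : Monotone (dyadicContent n δ) := fun _ _ h =>
  le_iInf₂ fun c hc => iInf₂_le c (h.trans hc)

lemma exists_dyadicCover_tsum_lt {E : Set (En n)} {r : ℝ≥0∞} (h : dyadicContent n δ E < r) :
    ∃ c : ℕ → ℤ × (Fin n → ℤ),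
      E ⊆ interior (⋃ i, cube n (c i)) ∧ ∑' i, weight δ (c i).1 < r := by
  simpa only [dyadicContent_eq, iInf_lt_iff, exists_prop] using h

lemma dyadicContent_le_tsum (hδ : 0 < δ) {ι : Type*} [Countable ι] {E : Set (En n)}
    (c : ι → ℤ × (Fin n → ℤ)) (h : E ⊆ interior (⋃ i, cube n (c i))) :
    dyadicContent n δ E ≤ ∑' i, weight δ (c i).1 := by
  refine ENNReal.le_of_forall_pos_le_add fun η hη _ => ?_
  -- complete `c` to a sequence by cubes of total weight less than `η`
  obtain ⟨z, hz⟩ := exists_tsum_weight_lt hδ (ε := η) (by positivity)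
  obtain ⟨e, he⟩ := exists_injective_nat ι
  set c' : ℕ → ℤ × (Fin n → ℤ) := Function.extend e c fun j => (z j, 0)
  have hcover : E ⊆ interior (⋃ j, cube n (c' j)) := by
    refine h.trans (interior_mono (iUnion_subset fun i => ?_))
    rw [← he.extend_apply c]
    exact subset_iUnion (fun j => cube n (c' j)) (e i)
  have hle : ∀ j, weight δ (c' j).1 ≤ Function.extend e (fun i => weight δ (c i).1) 0 j
      + weight δ (z j) := by
    intro j
    by_cases hj : ∃ i, e i = j
    · obtain ⟨i, rfl⟩ := hj
      simp only [c', he.extend_apply, le_self_add]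
    · simp only [c', Function.extend_apply' _ _ _ hj, Pi.zero_apply, zero_add, le_rfl]
  calc dyadicContent n δ E ≤ ∑' j, weight δ (c' j).1 := iInf₂_le c' hcover
    _ ≤ ∑' i, weight δ (c i).1 + η := by
      grw [ENNReal.tsum_le_tsum hle, ENNReal.tsum_add, tsum_extend_zero he, hz.le]

lemma dyadicContent_empty (hδ : 0 < δ) : dyadicContent n δ ∅ = 0 :=
  le_antisymm ((dyadicContent_le_tsum hδ (Empty.elim : Empty → ℤ × (Fin n → ℤ))
    (empty_subset _)).trans_eq tsum_empty) bot_le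

lemma dyadicContent_iUnion_le (hδ : 0 < δ) {ι : Type*} [Countable ι] (E : ι → Set (En n)) :
    dyadicContent n δ (⋃ k, E k) ≤ ∑' k, dyadicContent n δ (E k) := by
  refine ENNReal.le_of_forall_pos_le_add fun η hη hfin => ?_
  obtain ⟨ε, hεpos, hε⟩ := ENNReal.exists_pos_sum_of_countable' (ε := η) (by positivity) ι
  have hlt : ∀ k, dyadicContent n δ (E k) < dyadicContent n δ (E k) + ε k := fun k =>
    ENNReal.lt_add_right (ne_top_of_le_ne_top hfin.ne (ENNReal.le_tsum k)) (hεpos k).ne'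
  choose c hcover hc using fun k => exists_dyadicCover_tsum_lt (hlt k)
  have hU : (⋃ k, E k) ⊆ interior (⋃ p : ι × ℕ, cube n (c p.1 p.2)) :=
    iUnion_subset fun k => (hcover k).trans
      (interior_mono (iUnion_subset fun j => subset_iUnion_of_subset (k, j) subset_rfl))
  calc dyadicContent n δ (⋃ k, E k) ≤ ∑' p : ι × ℕ, weight δ (c p.1 p.2).1 :=
        dyadicContent_le_tsum hδ _ hU
    _ = ∑' k, ∑' j, weight δ (c k j).1 :=
        ENNReal.tsum_prod (f := fun k j => weight δ (c k j).1)
    _ ≤ ∑' k, (dyadicContent n δ (E k) + ε k) := ENNReal.tsum_le_tsum fun k => (hc k).le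
    _ ≤ ∑' k, dyadicContent n δ (E k) + η := by rw [ENNReal.tsum_add]; grw [hε.le]

lemma dyadicContent_union_add_inter_le_tsum (hδ : 0 < δ) {E F : Set (En n)}
    {c d : ℕ → ℤ × (Fin n → ℤ)} (hE : E ⊆ interior (⋃ i, cube n (c i)))
    (hF : F ⊆ interior (⋃ j, cube n (d j))) :
    dyadicContent n δ (E ∪ F) + dyadicContent n δ (E ∩ F) ≤
      ∑' i, weight δ (c i).1 + ∑' j, weight δ (d j).1 := by
  set C := Sum.elim c d
  have hsum : ∑' j, weight δ (C j).1 = ∑' i, weight δ (c i).1 + ∑' j, weight δ (d j).1 :=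
    ENNReal.summable.tsum_sum ENNReal.summable
  rcases eq_or_ne (∑' j, weight δ (C j).1) ∞ with htop | hfin
  · simp [← hsum, htop]
  obtain ⟨K, hK⟩ := exists_forall_le_of_tsum_weight_ne_top hδ hfin
  set S := {j | Kept c d j}
  have hunion : E ∪ F ⊆ interior (⋃ j : S, cube n (C j)) := by
    refine (union_subset_union hE hF).trans (subset_interior_union.trans
      (interior_mono fun x hx => ?_))
    obtain ⟨j, hj, hxj⟩ := exists_kept_mem hK hx
    exact mem_iUnion.mpr ⟨⟨j, hj⟩, hxj⟩
  have hinter : E ∩ F ⊆ interior (⋃ j : (Sᶜ : Set _), cube n (C j)) := by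
    refine (inter_subset_inter hE hF).trans (interior_inter.symm.subset.trans
      (interior_mono fun x hx => ?_))
    obtain ⟨j, hj, hxj⟩ := exists_not_kept_mem hx
    exact mem_iUnion.mpr ⟨⟨j, hj⟩, hxj⟩
  calc dyadicContent n δ (E ∪ F) + dyadicContent n δ (E ∩ F)
      ≤ ∑' j : S, weight δ (C j).1 + ∑' j : (Sᶜ : Set _), weight δ (C j).1 :=
        add_le_add (dyadicContent_le_tsum hδ _ hunion) (dyadicContent_le_tsum hδ _ hinter)
    _ = ∑' i, weight δ (c i).1 + ∑' j, weight δ (d j).1 := by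
      rw [ENNReal.summable.tsum_add_tsum_compl (f := fun j => weight δ (C j).1) ENNReal.summable,
        hsum]

lemma stronglySubadditive_dyadicContent (hδ : 0 < δ) :
    StronglySubadditive (dyadicContent n δ) := by
  intro E F
  refine ENNReal.le_of_forall_pos_le_add fun η hη hfin => ?_
  have hη2 : (η / 2 : ℝ≥0∞) ≠ 0 := by simpa using hη.ne'
  obtain ⟨c, hcE, hc⟩ := exists_dyadicCover_tsum_lt
    (ENNReal.lt_add_right (ENNReal.add_ne_top.mp hfin.ne).1 hη2)
  obtain ⟨d, hdF, hd⟩ := exists_dyadicCover_tsum_lt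
    (ENNReal.lt_add_right (ENNReal.add_ne_top.mp hfin.ne).2 hη2)
  calc dyadicContent n δ (E ∪ F) + dyadicContent n δ (E ∩ F)
      ≤ ∑' i, weight δ (c i).1 + ∑' j, weight δ (d j).1 :=
        dyadicContent_union_add_inter_le_tsum hδ hcE hdF
    _ ≤ dyadicContent n δ E + η / 2 + (dyadicContent n δ F + η / 2) := add_le_add hc.le hd.le
    _ = dyadicContent n δ E + dyadicContent n δ F + η := by
      rw [add_add_add_comm, ENNReal.add_halves]

end DyadicContent

section ChoquetDyadic

variable {n : ℕ} {δ : ℝ}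

lemma choquetIntegral_eq_choquet (Ω : Set (En n)) (F : En n → ℝ≥0∞) :
    choquetIntegral n δ Ω F = choquet (dyadicContent n δ) (Ω.indicator F) := by
  unfold choquetIntegral choquet
  congr! 3 with t
  ext x
  by_cases hx : x ∈ Ω <;> simp [hx]

lemma choquetIntegralAbs_eq_zero_iff (hδ : 0 < δ) (Ω : Set (En n)) (f : En n → ℝ) :
    choquetIntegralAbs n δ Ω f = 0 ↔
      ∃ E : Set (En n), dyadicContent n δ E = 0 ∧ ∀ x ∈ Ω, x ∉ E → f x = 0 := by
  have hnull (E : ℕ → Set (En n)) (hE : ∀ k, dyadicContent n δ (E k) = 0) :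
      dyadicContent n δ (⋃ k, E k) = 0 :=
    le_antisymm ((dyadicContent_iUnion_le hδ E).trans_eq (by simp [hE])) bot_le
  rw [choquetIntegralAbs, choquetIntegral_eq_choquet,
    choquet_eq_zero_iff dyadicContent_mono hnull]
  refine ⟨fun h => ⟨_, h, fun x hxΩ hxE => ?_⟩, fun ⟨E, hE, hfE⟩ => ?_⟩
  · by_contra hfx
    exact hxE (by simp [hxΩ, hfx])
  · refine le_antisymm ((dyadicContent_mono fun x hx => ?_).trans_eq hE) bot_le
    by_contra hxE
    by_cases hxΩ : x ∈ Ω <;> simp_all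

lemma choquetIntegralAbs_const_mul (hδ : 0 < δ) (Ω : Set (En n)) (f : En n → ℝ) (a : ℝ) :
    choquetIntegralAbs n δ Ω (fun x => a * f x) =
      ENNReal.ofReal |a| * choquetIntegralAbs n δ Ω f := by
  have hind : Ω.indicator (fun x => ENNReal.ofReal |a * f x|) =
      fun x => ENNReal.ofReal |a| * Ω.indicator (fun x => ENNReal.ofReal |f x|) x := by
    ext x; by_cases hx : x ∈ Ω <;> simp [hx, abs_mul, ENNReal.ofReal_mul]
  rw [choquetIntegralAbs, choquetIntegralAbs, choquetIntegral_eq_choquet,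
    choquetIntegral_eq_choquet, hind,
    choquet_const_mul (dyadicContent_empty hδ) ENNReal.ofReal_ne_top]

lemma choquetIntegralAbs_add_le (hδ : 0 < δ) (Ω : Set (En n)) (f g : En n → ℝ) :
    choquetIntegralAbs n δ Ω (fun x => f x + g x) ≤
      choquetIntegralAbs n δ Ω f + choquetIntegralAbs n δ Ω g := by
  have hind (h : En n → ℝ) : Ω.indicator (fun x => ENNReal.ofReal |h x|) =
      fun x => ENNReal.ofReal (Ω.indicator (fun x => |h x|) x) := by
    ext x; by_cases hx : x ∈ Ω <;> simp [hx]
  have hle : Ω.indicator (fun x => ENNReal.ofReal |f x + g x|) ≤ fun x =>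
      ENNReal.ofReal (Ω.indicator (fun x => |f x|) x + Ω.indicator (fun x => |g x|) x) := by
    intro x
    by_cases hx : x ∈ Ω
    · simpa [hx] using ENNReal.ofReal_le_ofReal (abs_add_le _ _)
    · simp [hx]
  simp only [choquetIntegralAbs, choquetIntegral_eq_choquet, hind f, hind g]
  exact (choquet_mono dyadicContent_mono hle).trans (choquet_ofReal_add_le
    dyadicContent_mono (stronglySubadditive_dyadicContent hδ) _ _)

end ChoquetDyadic

theorem nL1_norm_properties_general (n : ℕ) (Ω : Set (En n))
    (δ : ℝ) (hδ0 : 0 < δ) (f g : En n → ℝ) :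
    (choquetIntegralAbs n δ Ω f = 0 ↔
      ∃ E : Set (En n), dyadicContent n δ E = 0 ∧ ∀ x ∈ Ω, x ∉ E → f x = 0) ∧
    (∀ a : ℝ, choquetIntegralAbs n δ Ω (fun x => a * f x) =
      ENNReal.ofReal |a| * choquetIntegralAbs n δ Ω f) ∧
    choquetIntegralAbs n δ Ω (fun x => f x + g x) ≤
      choquetIntegralAbs n δ Ω f + choquetIntegralAbs n δ Ω g :=
  ⟨choquetIntegralAbs_eq_zero_iff hδ0 Ω f, choquetIntegralAbs_const_mul hδ0 Ω f,
    choquetIntegralAbs_add_le hδ0 Ω f g⟩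

/-- `‖f‖₁ = ∫_Ω |f| dH̃^δ_∞` has the properties of a norm on
`nL¹(Ω, H̃^δ_∞)` modulo `H̃^δ_∞`-a.e. equality: vanishing iff `f = 0` a.e.,
absolute homogeneity and the triangle inequality. -/
theorem nL1_norm_properties (n : ℕ) (hn : 1 ≤ n) (Ω : Set (En n))
    (δ : ℝ) (hδ0 : 0 < δ) (hδn : δ ≤ n) (f g : En n → ℝ)
    (hf : choquetIntegralAbs n δ Ω f < ⊤) (hg : choquetIntegralAbs n δ Ω g < ⊤) :
    (choquetIntegralAbs n δ Ω f = 0 ↔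
      ∃ E : Set (En n), dyadicContent n δ E = 0 ∧ ∀ x ∈ Ω, x ∉ E → f x = 0) ∧
    (∀ a : ℝ, choquetIntegralAbs n δ Ω (fun x => a * f x) =
      ENNReal.ofReal |a| * choquetIntegralAbs n δ Ω f) ∧
    choquetIntegralAbs n δ Ω (fun x => f x + g x) ≤
      choquetIntegralAbs n δ Ω f + choquetIntegralAbs n δ Ω g :=
  nL1_norm_properties_general n Ω δ hδ0 f g
end
end

section
/- Let n ≥ 1 and δ ∈ (0, n). There exists a constant c > 0 depending only on n and δ such that for every function f : ℝⁿ → [−∞, ∞], every x ∈ ℝⁿ and every r > 0, the average inequality (1/H̃^n_∞(B(x,r))) ∫_{B(x,r)} |f| dH̃^n_∞ ≤ c · ( (1/H̃^δ_∞(B(x,r))) ∫_{B(x,r)} |f|^{δ/n} dH̃^δ_∞ )^{n/δ} holds; consequently M^n f(x) ≤ c · ( M^δ(|f|^{δ/n})(x) )^{n/δ} for all x ∈ ℝⁿ. -/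
open MeasureTheory Set Metric Filter Topology
open scoped ENNReal

noncomputable section

/-!
Since `δ ≤ n`, `∑ ℓ(Qᵢ)ⁿ ≤ (∑ ℓ(Qᵢ)^δ)^(n/δ)` for every cover, so `H̃ⁿ_∞(E) ≤ H̃^δ_∞(E)^(n/δ)`.
Applied to the level sets of `|f|`, together with the substitution `t = s^(n/δ)` and the weak-type
bound `s · H̃^δ_∞({|f|^(δ/n) > s}) ≤ ∫ |f|^(δ/n) dH̃^δ_∞`, this gives
`∫_B |f| dH̃ⁿ_∞ ≤ (n/δ) (∫_B |f|^(δ/n) dH̃^δ_∞)^(n/δ)` on every set `B`.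
On a ball, `H̃^δ_∞(B(x,r)) ≲ r^δ` (it is covered by `2ⁿ` dyadic cubes of side `≤ 4r`) while
`H̃ⁿ_∞(B(x,r)) ≥ |B(x,r)| ≳ rⁿ`, so `H̃^δ_∞(B(x,r))^(n/δ) ≲ H̃ⁿ_∞(B(x,r))`. Dividing gives the
inequality of ball averages, and taking suprema over `r` the one of maximal functions.
-/

theorem ENNReal.rpow_sub_one_mul_self {p : ℝ} (hp : 1 ≤ p) (x : ℝ≥0∞) :
    x ^ (p - 1) * x = x ^ p := by
  simpa using (ENNReal.rpow_add_of_nonneg (x := x) (p - 1) 1 (sub_nonneg.2 hp) zero_le_one).symm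

theorem ENNReal.tsum_rpow_le_rpow_tsum {ι : Type*} {a : ι → ℝ≥0∞} {p : ℝ} (hp : 1 ≤ p) :
    ∑' i, a i ^ p ≤ (∑' i, a i) ^ p :=
  calc ∑' i, a i ^ p = ∑' i, a i ^ (p - 1) * a i := by
        simp only [ENNReal.rpow_sub_one_mul_self hp]
    _ ≤ ∑' i, (∑' j, a j) ^ (p - 1) * a i :=
        ENNReal.tsum_le_tsum fun i => by gcongr; exact ENNReal.le_tsum i
    _ = (∑' i, a i) ^ p := by rw [ENNReal.tsum_mul_left, ENNReal.rpow_sub_one_mul_self hp]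

theorem lintegral_comp_rpow_Ioi_of_pos {p : ℝ} (hp : 0 < p) (g : ℝ → ℝ≥0∞) :
    ∫⁻ x in Ioi 0, ENNReal.ofReal (p * x ^ (p - 1)) * g (x ^ p) = ∫⁻ y in Ioi 0, g y := by
  have hmono : StrictMonoOn (· ^ p) (Ici (0 : ℝ)) := Real.strictMonoOn_rpow_Ici_of_exponent_pos hp
  have himage : (· ^ p) '' Ioi 0 = Ioi (0 : ℝ) := by
    rw [(Real.continuous_rpow_const hp.le).continuousOn.image_Ioi_of_strictMonoOn hmono
      (tendsto_rpow_atTop hp), Real.zero_rpow hp.ne']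
  conv_rhs => rw [← himage, lintegral_image_eq_lintegral_deriv_mul_of_monotoneOn measurableSet_Ioi
    (fun x hx => (Real.hasDerivAt_rpow_const (Or.inl (mem_Ioi.1 hx).ne')).hasDerivWithinAt)
    (hmono.mono Ioi_subset_Ici_self).monotoneOn]

theorem ofReal_mul_le_setLIntegral_Ioi_of_antitone {H : ℝ → ℝ≥0∞} (hH : Antitone H) (s : ℝ) :
    ENNReal.ofReal s * H s ≤ ∫⁻ t in Ioi 0, H t :=
  calc ENNReal.ofReal s * H s = ∫⁻ _ in Ioo 0 s, H s := by
        rw [setLIntegral_const, Real.volume_Ioo, sub_zero, mul_comm]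
    _ ≤ ∫⁻ t in Ioo 0 s, H t := setLIntegral_mono' measurableSet_Ioo fun t ht => hH ht.2.le
    _ ≤ ∫⁻ t in Ioi 0, H t := lintegral_mono_set Ioo_subset_Ioi_self

theorem setLIntegral_Ioi_le_ofReal_mul_rpow {p : ℝ} (hp : 1 ≤ p) {G H : ℝ → ℝ≥0∞}
    (hH : Antitone H) (hGH : ∀ s, 0 < s → G (s ^ p) ≤ H s ^ p) :
    ∫⁻ t in Ioi 0, G t ≤ ENNReal.ofReal p * (∫⁻ s in Ioi 0, H s) ^ p := by
  have hp0 : 0 < p := zero_lt_one.trans_le hp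
  have hp1 : 0 ≤ p - 1 := sub_nonneg.2 hp
  set I := ∫⁻ s in Ioi 0, H s
  -- `s H(s) ≤ I` turns `p s^(p-1) H(s)^p` into `p I^(p-1) H(s)`, which integrates to `p I^p`.
  have hpointwise : ∀ s ∈ Ioi (0 : ℝ),
      ENNReal.ofReal (p * s ^ (p - 1)) * H s ^ p ≤ ENNReal.ofReal p * I ^ (p - 1) * H s := by
    intro s hs
    rw [ENNReal.ofReal_mul hp0.le, ← ENNReal.ofReal_rpow_of_pos hs,
      ← ENNReal.rpow_sub_one_mul_self hp, mul_assoc, ← mul_assoc (_ ^ _),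
      ← ENNReal.mul_rpow_of_nonneg _ _ hp1, mul_assoc]
    gcongr
    exact ofReal_mul_le_setLIntegral_Ioi_of_antitone hH s
  calc ∫⁻ t in Ioi 0, G t
      = ∫⁻ s in Ioi 0, ENNReal.ofReal (p * s ^ (p - 1)) * G (s ^ p) :=
        (lintegral_comp_rpow_Ioi_of_pos hp0 G).symm
    _ ≤ ∫⁻ s in Ioi 0, ENNReal.ofReal (p * s ^ (p - 1)) * H s ^ p :=
        setLIntegral_mono' measurableSet_Ioi fun s hs => by gcongr; exact hGH s hs
    _ ≤ ∫⁻ s in Ioi 0, ENNReal.ofReal p * I ^ (p - 1) * H s :=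
        setLIntegral_mono' measurableSet_Ioi hpointwise
    _ = ENNReal.ofReal p * I ^ p := by
        rw [lintegral_const_mul _ hH.measurable, mul_assoc, ENNReal.rpow_sub_one_mul_self hp]

section DyadicContent

variable {n : ℕ}

theorem dyadicContent_mono_s6 {δ : ℝ} {E F : Set (En n)} (h : E ⊆ F) :
    dyadicContent n δ E ≤ dyadicContent n δ F :=
  le_iInf₂ fun c hc => iInf₂_le c (h.trans hc)

theorem dyadicContent_le_rpow {δ δ' : ℝ} (hδ : 0 < δ) (hδδ' : δ ≤ δ') (E : Set (En n)) :
    dyadicContent n δ' E ≤ dyadicContent n δ E ^ (δ' / δ) := by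
  have hp : 1 ≤ δ' / δ := (one_le_div hδ).2 hδδ'
  rw [← ENNReal.rpow_inv_le_iff (zero_lt_one.trans_le hp)]
  refine le_iInf₂ fun c hc => (ENNReal.rpow_inv_le_iff (zero_lt_one.trans_le hp)).2 ?_
  calc dyadicContent n δ' E ≤ ∑' i, ENNReal.ofReal (((2 : ℝ) ^ (c i).1) ^ δ') := iInf₂_le c hc
    _ = ∑' i, ENNReal.ofReal (((2 : ℝ) ^ (c i).1) ^ δ) ^ (δ' / δ) := by
        refine tsum_congr fun i => ?_
        have h2k : (0 : ℝ) < 2 ^ (c i).1 := zpow_pos two_pos _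
        rw [ENNReal.ofReal_rpow_of_pos (Real.rpow_pos_of_pos h2k δ), ← Real.rpow_mul h2k.le,
          mul_div_cancel₀ _ hδ.ne']
    _ ≤ _ := ENNReal.tsum_rpow_le_rpow_tsum hp

theorem volume_dyadicCube (k : ℤ) (m : Fin n → ℤ) :
    volume (dyadicCube n k m) = ENNReal.ofReal (((2 : ℝ) ^ k) ^ (n : ℝ)) := by
  have hcube : dyadicCube n k m =
      WithLp.ofLp ⁻¹' Set.pi univ fun i => Ico ((m i : ℝ) * 2 ^ k) ((m i + 1) * 2 ^ k) := by
    ext x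
    simp [dyadicCube, Set.mem_pi]
  rw [hcube, (PiLp.volume_preserving_ofLp (Fin n)).measure_preimage
    (MeasurableSet.univ_pi fun _ => measurableSet_Ico).nullMeasurableSet, volume_pi_pi]
  simp_rw [Real.volume_Ico, ← sub_mul, add_sub_cancel_left, one_mul]
  rw [Finset.prod_const, Finset.card_univ, Fintype.card_fin, Real.rpow_natCast,
    ENNReal.ofReal_pow (zpow_pos two_pos k).le]

theorem volume_le_dyadicContent (E : Set (En n)) : volume E ≤ dyadicContent n n E :=
  le_iInf₂ fun c hc =>
    calc volume E ≤ volume (⋃ i, dyadicCube n (c i).1 (c i).2) :=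
          measure_mono (hc.trans interior_subset)
      _ ≤ ∑' i, volume (dyadicCube n (c i).1 (c i).2) := measure_iUnion_le _
      _ = _ := tsum_congr fun _ => volume_dyadicCube _ _

/-- The cover is padded to an `ℕ`-indexed one with cubes `2^(k-j₀-j)[0,1)ⁿ`; for `j₀` large their
total contribution, a geometric series, is at most `ℓ(Q)^δ`. -/
theorem dyadicContent_le_of_subset_interior_iUnion {δ : ℝ} (hδ : 0 < δ) {ι : Type*} [Fintype ι]
    {E : Set (En n)} (k : ℤ) (m : ι → Fin n → ℤ)
    (hE : E ⊆ interior (⋃ i, dyadicCube n k (m i))) :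
    dyadicContent n δ E ≤ (Fintype.card ι + 1) * ENNReal.ofReal ((2 ^ k) ^ δ) := by
  set N := Fintype.card ι
  set e := (Fintype.equivFin ι).symm
  set A := ENNReal.ofReal (((2 : ℝ) ^ k) ^ δ)
  set q := ENNReal.ofReal ((2 : ℝ) ^ (-δ))
  have hq : q < 1 :=
    ENNReal.ofReal_lt_one.2 (Real.rpow_lt_one_of_one_lt_of_neg one_lt_two (neg_neg_of_pos hδ))
  obtain ⟨j₀, hj₀⟩ : ∃ j₀ : ℕ, q ^ j₀ < 1 - q :=
    ((ENNReal.tendsto_pow_atTop_nhds_zero_iff.2 hq).eventually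
      (gt_mem_nhds (tsub_pos_of_lt hq))).exists
  let c : ℕ → ℤ × (Fin n → ℤ) := fun j =>
    if h : j < N then (k, m (e ⟨j, h⟩)) else (k - (j₀ + j : ℕ), 0)
  have hcover : E ⊆ interior (⋃ j, dyadicCube n (c j).1 (c j).2) := by
    refine hE.trans (interior_mono (iUnion_subset fun i => ?_))
    have hc : c (e.symm i) = (k, m i) := by
      simp only [c, Fin.eta, Equiv.apply_symm_apply]
      exact dif_pos (e.symm i).isLt
    exact subset_iUnion_of_subset (e.symm i) (by rw [hc])
  have hterm : ∀ j, ENNReal.ofReal (((2 : ℝ) ^ (c j).1) ^ δ) ≤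
      (if j < N then A else 0) + A * q ^ j₀ * q ^ j := by
    intro j
    by_cases hj : j < N
    · simp [c, hj, A]
    · have h2 : ((2 : ℝ) ^ (k - (j₀ + j : ℕ))) ^ δ = (2 ^ k) ^ δ * (2 ^ (-δ)) ^ (j₀ + j) := by
        rw [← Real.rpow_intCast, ← Real.rpow_intCast, ← Real.rpow_natCast,
          ← Real.rpow_mul two_pos.le, ← Real.rpow_mul two_pos.le, ← Real.rpow_mul two_pos.le,
          ← Real.rpow_add two_pos]
        push_cast
        ring_nf
      simp only [c, hj, dif_neg, not_false_eq_true, if_false, zero_add, h2]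
      rw [ENNReal.ofReal_mul (Real.rpow_nonneg (zpow_pos two_pos k).le δ),
        ENNReal.ofReal_pow (Real.rpow_nonneg two_pos.le _), pow_add, mul_assoc]
  have hfinite : ∑' j : ℕ, (if j < N then A else 0) = N * A := by
    rw [tsum_eq_sum (s := Finset.range N) fun j hj => if_neg (by simpa using hj),
      Finset.sum_congr rfl fun j hj => if_pos (Finset.mem_range.1 hj)]
    simp
  have hpadding : q ^ j₀ * (1 - q)⁻¹ ≤ 1 :=
    calc q ^ j₀ * (1 - q)⁻¹ ≤ (1 - q) * (1 - q)⁻¹ := by gcongr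
      _ = 1 := ENNReal.mul_inv_cancel (tsub_pos_of_lt hq).ne' (by simp)
  calc dyadicContent n δ E ≤ ∑' j, ENNReal.ofReal (((2 : ℝ) ^ (c j).1) ^ δ) := iInf₂_le c hcover
    _ ≤ ∑' j, ((if j < N then A else 0) + A * q ^ j₀ * q ^ j) := ENNReal.tsum_le_tsum hterm
    _ = N * A + A * (q ^ j₀ * (1 - q)⁻¹) := by
        rw [ENNReal.tsum_add, hfinite, ENNReal.tsum_mul_left, ENNReal.tsum_geometric, mul_assoc]
    _ ≤ (N + 1) * A := by
        rw [add_mul, one_mul]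
        gcongr
        exact mul_le_of_le_one_right' hpadding

theorem ball_subset_interior_iUnion_dyadicCube (x : En n) {r : ℝ} {k : ℤ} (hk : 2 * r ≤ 2 ^ k) :
    ∃ m : Fin n → ℤ, ball x r ⊆
      interior (⋃ b : Fin n → Bool, dyadicCube n k (m + fun j => ((b j).toNat : ℤ))) := by
  have h2k : (0 : ℝ) < 2 ^ k := zpow_pos two_pos k
  set m : Fin n → ℤ := fun j => ⌊(x j - r) / 2 ^ k⌋
  have hm : ∀ j, (m j : ℝ) * 2 ^ k ≤ x j - r := fun j =>
    (le_div_iff₀ h2k).1 (Int.floor_le _)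
  have hm' : ∀ j, x j - r < (m j + 1) * 2 ^ k := fun j =>
    (div_lt_iff₀ h2k).1 (Int.lt_floor_add_one _)
  set U : Set (En n) := ⋂ j, {y | m j * 2 ^ k < y j} ∩ {y | y j < (m j + 2) * 2 ^ k}
  have hU : IsOpen U := isOpen_iInter_of_finite fun j =>
    (isOpen_lt continuous_const (by fun_prop)).inter (isOpen_lt (by fun_prop) continuous_const)
  refine ⟨m, fun y hy => interior_maximal ?_ hU ?_⟩
  · intro z hz
    simp only [U, mem_iInter, mem_inter_iff, mem_ofPred_eq] at hz
    refine mem_iUnion.2 ⟨fun j => decide ((m j + 1) * 2 ^ k ≤ z j), fun j => ?_⟩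
    by_cases hj : (m j + 1) * 2 ^ k ≤ z j
    · simp only [hj, Pi.add_apply, decide_true, Bool.toNat_true]
      push_cast
      constructor <;> linarith [hz j]
    · simp only [hj, Pi.add_apply, decide_false, Bool.toNat_false]
      push_cast
      constructor <;> linarith [hz j]
  · have hyx : ∀ j, |y j - x j| < r := fun j =>
      ((Real.dist_eq _ _).symm.trans_le (PiLp.dist_apply_le y x j)).trans_lt (mem_ball.1 hy)
    simp only [U, mem_iInter, mem_inter_iff, mem_ofPred_eq]
    intro j
    have := abs_lt.1 (hyx j)
    constructor <;> linarith [hm j, hm' j]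

theorem dyadicContent_ball_le {δ : ℝ} (hδ : 0 < δ) (x : En n) {r : ℝ} (hr : 0 < r) :
    dyadicContent n δ (ball x r) ≤ (2 ^ n + 1) * ENNReal.ofReal ((4 * r) ^ δ) := by
  obtain ⟨j, hj, hj'⟩ := exists_mem_Ico_zpow (by positivity : 0 < 2 * r) one_lt_two
  have h2j : (2 : ℝ) ^ (j + 1) = 2 * 2 ^ j := by rw [zpow_add_one₀ two_ne_zero, mul_comm]
  obtain ⟨m, hm⟩ := ball_subset_interior_iUnion_dyadicCube x hj'.le
  refine (dyadicContent_le_of_subset_interior_iUnion hδ _ _ hm).trans ?_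
  simp only [Fintype.card_fun, Fintype.card_bool, Fintype.card_fin, Nat.cast_pow, Nat.cast_ofNat]
  gcongr
  linarith

theorem dyadicContent_ball_lt_top {δ : ℝ} (hδ : 0 < δ) (x : En n) {r : ℝ} (hr : 0 < r) :
    dyadicContent n δ (ball x r) < ∞ :=
  (dyadicContent_ball_le hδ x hr).trans_lt (by finiteness)

theorem dyadicContent_ball_pos {δ : ℝ} (hδ : 0 < δ) (hδn : δ ≤ n) (x : En n) {r : ℝ}
    (hr : 0 < r) : 0 < dyadicContent n δ (ball x r) := by
  have hvol : 0 < dyadicContent n δ (ball x r) ^ ((n : ℝ) / δ) :=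
    (measure_ball_pos volume x hr).trans_le
      ((volume_le_dyadicContent _).trans (dyadicContent_le_rpow hδ hδn _))
  exact pos_of_ne_zero fun h => by simp [h, div_pos (hδ.trans_le hδn) hδ] at hvol

theorem exists_rpow_dyadicContent_ball_le_mul {δ : ℝ} (hδ : 0 < δ) (hδn : δ ≤ n) :
    ∃ C : ℝ, 0 < C ∧ ∀ (x : En n) (r : ℝ), 0 < r →
      dyadicContent n δ (ball x r) ^ ((n : ℝ) / δ) ≤
        ENNReal.ofReal C * dyadicContent n n (ball x r) := by
  have hp : 0 < (n : ℝ) / δ := div_pos (hδ.trans_le hδn) hδ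
  set v := volume (ball (0 : En n) 1)
  have hv : v ≠ 0 := (measure_ball_pos volume 0 one_pos).ne'
  set C' := (2 ^ n + 1 : ℝ≥0∞) ^ ((n : ℝ) / δ) * ENNReal.ofReal (4 ^ n) / v
  have hC' : C' ≠ ∞ := ENNReal.div_ne_top (by finiteness) hv
  refine ⟨C'.toReal + 1, by positivity, fun x r hr => ?_⟩
  calc dyadicContent n δ (ball x r) ^ ((n : ℝ) / δ)
      ≤ ((2 ^ n + 1) * ENNReal.ofReal ((4 * r) ^ δ)) ^ ((n : ℝ) / δ) := by
        gcongr
        exact dyadicContent_ball_le hδ x hr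
    _ = C' * volume (ball x r) := by
        rw [ENNReal.mul_rpow_of_nonneg _ _ hp.le,
          ENNReal.ofReal_rpow_of_pos (Real.rpow_pos_of_pos (by positivity) _),
          ← Real.rpow_mul (by positivity), mul_div_cancel₀ _ hδ.ne', Real.rpow_natCast, mul_pow,
          ENNReal.ofReal_mul (by positivity), Measure.addHaar_ball_of_pos _ _ hr,
          finrank_euclideanSpace_fin, ← mul_assoc, mul_comm _ v, ← mul_assoc,
          ENNReal.div_mul_cancel hv measure_ball_lt_top.ne]
    _ ≤ ENNReal.ofReal (C'.toReal + 1) * dyadicContent n n (ball x r) := by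
        gcongr
        · exact (ENNReal.le_ofReal_iff_toReal_le hC' (by positivity)).2 (by linarith)
        · exact volume_le_dyadicContent _

theorem choquetIntegral_le_ofReal_mul_rpow {δ δ' : ℝ} (hδ : 0 < δ) (hδδ' : δ ≤ δ')
    (Ω : Set (En n)) (F : En n → ℝ≥0∞) :
    choquetIntegral n δ' Ω F ≤
      ENNReal.ofReal (δ' / δ) * choquetIntegral n δ Ω (fun y => F y ^ (δ / δ')) ^ (δ' / δ) := by
  have hp : 1 ≤ δ' / δ := (one_le_div hδ).2 hδδ'
  refine setLIntegral_Ioi_le_ofReal_mul_rpow hp (fun s t hst => dyadicContent_mono_s6 fun y hy =>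
    ⟨hy.1, (ENNReal.ofReal_le_ofReal hst).trans_lt hy.2⟩) fun s hs => ?_
  have hlevel : {y | y ∈ Ω ∧ ENNReal.ofReal (s ^ (δ' / δ)) < F y} =
      {y | y ∈ Ω ∧ ENNReal.ofReal s < F y ^ (δ / δ')} := by
    ext y
    rw [mem_ofPred_eq, mem_ofPred_eq, ← inv_div δ', ENNReal.lt_rpow_inv_iff (by positivity),
      ENNReal.ofReal_rpow_of_pos hs]
  rw [hlevel]
  exact dyadicContent_le_rpow hδ hδδ' _

theorem exists_ballAvg_le_ofReal_mul_rpow_ballAvg {δ : ℝ} (hδ : 0 < δ) (hδn : δ ≤ n) :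
    ∃ c : ℝ, 0 < c ∧ ∀ (F : En n → ℝ≥0∞) (x : En n) (r : ℝ), 0 < r →
      ballAvg n n F x r ≤
        ENNReal.ofReal c * ballAvg n δ (fun y => F y ^ (δ / n)) x r ^ ((n : ℝ) / δ) := by
  obtain ⟨C, hC, hball⟩ := exists_rpow_dyadicContent_ball_le_mul hδ hδn
  have hp : 0 < (n : ℝ) / δ := div_pos (hδ.trans_le hδn) hδ
  refine ⟨n / δ * C, by positivity, fun F x r hr => ?_⟩
  set I := choquetIntegral n δ (ball x r) fun y => F y ^ (δ / n)
  set Hd := dyadicContent n δ (ball x r)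
  set Hn := dyadicContent n n (ball x r)
  have hHd_top : Hd ≠ ∞ := (dyadicContent_ball_lt_top hδ x hr).ne
  have hHd : Hd ^ ((n : ℝ) / δ) ≠ 0 :=
    (ENNReal.rpow_pos (dyadicContent_ball_pos hδ hδn x hr) hHd_top).ne'
  have hHd' : Hd ^ ((n : ℝ) / δ) ≠ ∞ := ENNReal.rpow_ne_top_of_nonneg hp.le hHd_top
  have hinv : Hn⁻¹ ≤ ENNReal.ofReal C / Hd ^ ((n : ℝ) / δ) := by
    rw [ENNReal.le_div_iff_mul_le (Or.inl hHd) (Or.inl hHd'), mul_comm, ← div_eq_mul_inv]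
    exact ENNReal.div_le_of_le_mul (hball x r hr)
  calc ballAvg n n F x r ≤ ENNReal.ofReal (n / δ) * I ^ ((n : ℝ) / δ) / Hn :=
        ENNReal.div_le_div_right (choquetIntegral_le_ofReal_mul_rpow hδ hδn _ F) _
    _ = ENNReal.ofReal (n / δ) * I ^ ((n : ℝ) / δ) * Hn⁻¹ := div_eq_mul_inv _ _
    _ ≤ ENNReal.ofReal (n / δ) * I ^ ((n : ℝ) / δ) * (ENNReal.ofReal C / Hd ^ ((n : ℝ) / δ)) :=
        by gcongr
    _ = ENNReal.ofReal (n / δ * C) * (I / Hd) ^ ((n : ℝ) / δ) := by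
        rw [ENNReal.div_rpow_of_nonneg _ _ hp.le, ENNReal.ofReal_mul hp.le,
          ENNReal.div_eq_inv_mul, ENNReal.div_eq_inv_mul]
        ring

end DyadicContent

theorem pointwise_maximal_comparison_general (n : ℕ) (δ : ℝ) (hδ0 : 0 < δ) (hδn : δ < n) :
    ∃ c : ℝ, 0 < c ∧ ∀ f : En n → EReal, ∀ x : En n,
      (∀ r : ℝ, 0 < r →
        ballAvg n (n : ℝ) (fun y => (f y).abs) x r ≤
          ENNReal.ofReal c *
            (ballAvg n δ (fun y => (f y).abs ^ (δ / (n : ℝ))) x r) ^ ((n : ℝ) / δ)) ∧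
      maximal n (n : ℝ) (fun y => (f y).abs) x ≤
        ENNReal.ofReal c *
          (maximal n δ (fun y => (f y).abs ^ (δ / (n : ℝ))) x) ^ ((n : ℝ) / δ) := by
  obtain ⟨c, hc, hball⟩ := exists_ballAvg_le_ofReal_mul_rpow_ballAvg hδ0 hδn.le
  refine ⟨c, hc, fun f x => ⟨hball _ x, iSup₂_le fun r hr => (hball _ x r hr).trans ?_⟩⟩
  gcongr
  exact le_iSup₂ (f := fun r (_ : 0 < r) => ballAvg n δ _ x r) r hr

/-- pointwise comparison of `n`-dimensional and `δ`-dimensional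
Hausdorff-content averages, and the resulting maximal function estimate
`M^n f(x) ≤ c (M^δ(|f|^{δ/n})(x))^{n/δ}`. -/
theorem pointwise_maximal_comparison (n : ℕ) (hn : 1 ≤ n)
    (δ : ℝ) (hδ0 : 0 < δ) (hδn : δ < n) :
    ∃ c : ℝ, 0 < c ∧ ∀ f : En n → EReal, ∀ x : En n,
      (∀ r : ℝ, 0 < r →
        ballAvg n (n : ℝ) (fun y => (f y).abs) x r ≤
          ENNReal.ofReal c *
            (ballAvg n δ (fun y => (f y).abs ^ (δ / (n : ℝ))) x r) ^ ((n : ℝ) / δ)) ∧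
      maximal n (n : ℝ) (fun y => (f y).abs) x ≤
        ENNReal.ofReal c *
          (maximal n δ (fun y => (f y).abs ^ (δ / (n : ℝ))) x) ^ ((n : ℝ) / δ) :=
  pointwise_maximal_comparison_general n δ hδ0 hδn
end
end
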